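/- arXiv:1102.3165 — 5 statements merged into one kernel-verified Lean document; each statement's English description precedes it below -/
import Mathlib

section
/- Let w⁻, w⁺ > 0, v = (0, y, -z⁻) with z⁻ > 0, and for x ∈ ℝ let x̄ = (x, 0, z⁺) with z⁺ > 0. Define c(v,x) = inf over a ∈ {z = 0} of (w⁻·|v - a| + w⁺·|a - x̄|). Then c(v,·) is strictly increasing on x > 0. -/
/-!
Fix `0 < x₁ < x₂`. The cost of bending at `a ∈ F` dominates `w⁻ · |a - (0, y)|`, so it is
coercive and has a minimizer `a` for `x₂`. Scaling the first coordinate of `a` by `r = x₁ / x₂`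
brings it no farther from `v`, whose first coordinate is `0`, and multiplies its first-coordinate
offset to `x̄` by `r` exactly, turning it into the offset to `x̄₁`. Both legs get no longer and,
as `a.1` and `a.1 - x₂` cannot both vanish, one of them gets strictly shorter.
-/

/-- The point `(a, b, c)` of Euclidean 3-space. -/
noncomputable def pt3 (a b c : ℝ) : EuclideanSpace ℝ (Fin 3) := WithLp.toLp 2 ![a, b, c]

/-- The weighted distance function `c(v,x)` from `v = (0, y, -z⁻)` to `x̄ = (x, 0, z⁺)`,
obtained by minimizing `w⁻·|v - a| + w⁺·|a - x̄|` over bending points `a` in the plane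
`F = {z = 0}`. -/
noncomputable def wdist (wm wp y zm zp : ℝ) (x : ℝ) : ℝ :=
  ⨅ a : ℝ × ℝ, (wm * dist (pt3 0 y (-zm)) (pt3 a.1 a.2 0)
    + wp * dist (pt3 a.1 a.2 0) (pt3 x 0 zp))

lemma dist_pt3 (a b c d e f : ℝ) :
    dist (pt3 a b c) (pt3 d e f) = √((a - d) ^ 2 + (b - e) ^ 2 + (c - f) ^ 2) := by
  simp [EuclideanSpace.dist_eq, pt3, Fin.sum_univ_three, Real.dist_eq, sq_abs]

noncomputable def bendCost (wm wp y zm zp x : ℝ) (a : ℝ × ℝ) : ℝ :=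
  wm * √(a.1 ^ 2 + (a.2 - y) ^ 2 + zm ^ 2) + wp * √((a.1 - x) ^ 2 + a.2 ^ 2 + zp ^ 2)

section

variable {wm wp y zm zp : ℝ}

lemma wdist_eq_iInf_bendCost (x : ℝ) :
    wdist wm wp y zm zp x = ⨅ a, bendCost wm wp y zm zp x a := by
  unfold wdist
  congr 1 with a
  rw [dist_pt3, dist_pt3, bendCost]
  ring_nf

lemma bendCost_nonneg (hwm : 0 ≤ wm) (hwp : 0 ≤ wp) (x : ℝ) (a : ℝ × ℝ) :
    0 ≤ bendCost wm wp y zm zp x a := by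
  unfold bendCost; positivity

lemma continuous_bendCost (x : ℝ) : Continuous (bendCost wm wp y zm zp x) := by
  unfold bendCost; fun_prop

lemma dist_le_of_bendCost_le (hwm : 0 < wm) (hwp : 0 ≤ wp) {x C : ℝ} {a : ℝ × ℝ}
    (h : bendCost wm wp y zm zp x a ≤ C) : dist a (0, y) ≤ C / wm := by
  have hleg : wm * √(a.1 ^ 2 + (a.2 - y) ^ 2 + zm ^ 2) ≤ C := by
    refine le_trans ?_ h
    unfold bendCost
    linarith [mul_nonneg hwp (Real.sqrt_nonneg ((a.1 - x) ^ 2 + a.2 ^ 2 + zp ^ 2))]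
  rw [le_div_iff₀ hwm, mul_comm]
  refine le_trans (mul_le_mul_of_nonneg_left ?_ hwm.le) hleg
  rw [Prod.dist_eq, Real.dist_eq, Real.dist_eq, sub_zero]
  refine max_le (Real.abs_le_sqrt ?_) (Real.abs_le_sqrt ?_) <;> nlinarith [sq_nonneg zm]

lemma exists_forall_bendCost_le (hwm : 0 < wm) (hwp : 0 ≤ wp) (x : ℝ) :
    ∃ a, ∀ b, bendCost wm wp y zm zp x a ≤ bendCost wm wp y zm zp x b := by
  refine (continuous_bendCost x).exists_forall_le_of_isBounded 0 ?_
  exact (Metric.isBounded_closedBall (x := ((0 : ℝ), y))).subset fun a ha =>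
    dist_le_of_bendCost_le hwm hwp ha

lemma bendCost_scale_lt (hwm : 0 < wm) (hwp : 0 < wp) {x₁ x₂ : ℝ} (hx₁ : 0 < x₁)
    (hlt : x₁ < x₂) (a : ℝ × ℝ) :
    bendCost wm wp y zm zp x₁ (x₁ / x₂ * a.1, a.2) < bendCost wm wp y zm zp x₂ a := by
  have hx₂ : 0 < x₂ := hx₁.trans hlt
  set r := x₁ / x₂
  have hr0 : 0 < r := div_pos hx₁ hx₂
  have hr1 : r < 1 := (div_lt_one hx₂).2 hlt
  have hsq : (r * a.1 - x₁) ^ 2 = r ^ 2 * (a.1 - x₂) ^ 2 := by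
    rw [← div_mul_cancel₀ x₁ hx₂.ne']; ring
  have hr2 : r ^ 2 < 1 := by nlinarith
  unfold bendCost
  dsimp only
  rw [hsq]
  rcases eq_or_ne a.1 0 with h | h
  · refine add_lt_add_of_le_of_lt ?_ ?_
    · simp [h]
    · gcongr
      rw [h]
      nlinarith [sq_pos_of_pos hx₂]
  · refine add_lt_add_of_lt_of_le ?_ ?_
    · have : (r * a.1) ^ 2 < a.1 ^ 2 := by nlinarith [sq_pos_of_ne_zero h]
      gcongr ?_ * √(?_ + _ + _)
    · gcongr
      nlinarith [sq_nonneg (a.1 - x₂)]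

end

theorem stmt_1_general (wm wp y zm zp : ℝ) (hwm : 0 < wm) (hwp : 0 < wp) :
    StrictMonoOn (wdist wm wp y zm zp) (Set.Ioi 0) := by
  intro x₁ hx₁ x₂ _ hlt
  obtain ⟨a, ha⟩ := exists_forall_bendCost_le (y := y) (zm := zm) (zp := zp) hwm hwp.le x₂
  rw [wdist_eq_iInf_bendCost, wdist_eq_iInf_bendCost]
  calc ⨅ b, bendCost wm wp y zm zp x₁ b
      ≤ bendCost wm wp y zm zp x₁ (x₁ / x₂ * a.1, a.2) :=
        ciInf_le ⟨0, Set.forall_mem_range.2 (bendCost_nonneg hwm.le hwp.le x₁)⟩ _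
    _ < bendCost wm wp y zm zp x₂ a := bendCost_scale_lt hwm hwp hx₁ hlt a
    _ ≤ ⨅ b, bendCost wm wp y zm zp x₂ b := le_ciInf ha

/-- The weighted distance function `x ↦ c(v,x)` is strictly increasing for `x > 0`. -/
theorem stmt_1 (wm wp y zm zp : ℝ) (hwm : 0 < wm) (hwp : 0 < wp)
    (hzm : 0 < zm) (hzp : 0 < zp) :
    StrictMonoOn (wdist wm wp y zm zp) (Set.Ioi 0) :=
  stmt_1_general wm wp y zm zp hwm hwp
end

section
/- Let θ, θ₁, θ₂ be the angles of a (nondegenerate) triangle with vertices q, x₁, x₂ at q, x₁, x₂ respectively. Then |x₁ - q| + |q - x₂| = (1 + (2·sin(θ₁/2)·sin(θ₂/2))/sin(θ/2)) · |x₁ - x₂|. -/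
/-!
Adding the two instances `sin θ₁ · |x₁ - x₂| = sin θ · |q - x₂|` and
`sin θ₂ · |x₁ - x₂| = sin θ · |x₁ - q|` of the law of sines gives
`(sin θ₁ + sin θ₂) · |x₁ - x₂| = sin θ · (|x₁ - q| + |q - x₂|)`, so the claim reduces to a
trigonometric identity for angles summing to `π`.
-/

open EuclideanGeometry Real

/-- With `a = θ₁ / 2`, `b = θ₂ / 2` and `θ / 2 = π / 2 - (a + b)`, this is
`sin 2a + sin 2b = 2 sin (a + b) cos (a - b)` together with
`cos (a - b) = cos (a + b) + 2 sin a sin b`. -/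
theorem sin_add_sin_eq_sin_mul_of_add_add_eq_pi {θ θ₁ θ₂ : ℝ} (hsum : θ + θ₁ + θ₂ = π)
    (hθ : sin (θ / 2) ≠ 0) :
    sin θ₁ + sin θ₂ = sin θ * (1 + 2 * sin (θ₁ / 2) * sin (θ₂ / 2) / sin (θ / 2)) := by
  have half : θ / 2 = π / 2 - (θ₁ / 2 + θ₂ / 2) := by linarith
  rw [show sin θ = sin (2 * (θ / 2)) by ring_nf, show sin θ₁ = sin (2 * (θ₁ / 2)) by ring_nf,
    show sin θ₂ = sin (2 * (θ₂ / 2)) by ring_nf, sin_two_mul, sin_two_mul, sin_two_mul]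
  field_simp
  rw [half, sin_pi_div_two_sub, cos_pi_div_two_sub, sin_add, cos_add]
  linear_combination -sin (θ₁ / 2) * cos (θ₁ / 2) * sin_sq_add_cos_sq (θ₂ / 2) -
    sin (θ₂ / 2) * cos (θ₂ / 2) * sin_sq_add_cos_sq (θ₁ / 2)

section

variable {V P : Type*} [NormedAddCommGroup V] [InnerProductSpace ℝ V] [MetricSpace P]
  [NormedAddTorsor V P]

theorem dist_add_dist_eq_mul_dist_of_not_collinear {q x₁ x₂ : P}
    (h : ¬Collinear ℝ ({q, x₁, x₂} : Set P)) :
    dist x₁ q + dist q x₂ =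
      (1 + 2 * sin (∠ q x₁ x₂ / 2) * sin (∠ q x₂ x₁ / 2) / sin (∠ x₁ q x₂ / 2)) *
        dist x₁ x₂ := by
  have h' : ¬Collinear ℝ ({x₁, q, x₂} : Set P) := by rwa [Set.insert_comm]
  have hsum : ∠ x₁ q x₂ + ∠ q x₁ x₂ + ∠ q x₂ x₁ = π := by
    linarith [angle_add_angle_add_angle_eq_pi x₂ (ne₁₂_of_not_collinear h), angle_comm x₂ x₁ q]
  have hhalf : sin (∠ x₁ q x₂ / 2) ≠ 0 := by
    have := angle_pos_of_not_collinear h'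
    have := angle_lt_pi_of_not_collinear h'
    exact (sin_pos_of_pos_of_lt_pi (by linarith) (by linarith)).ne'
  have sine₁ := sin_angle_mul_dist_eq_sin_angle_mul_dist q x₁ x₂
  have sine₂ := sin_angle_mul_dist_eq_sin_angle_mul_dist q x₂ x₁
  rw [angle_comm x₂ q x₁, dist_comm x₂ q] at sine₁
  rw [dist_comm x₂ x₁] at sine₂
  have key : sin (∠ x₁ q x₂) * (dist x₁ q + dist q x₂) =
      sin (∠ x₁ q x₂) * ((1 + 2 * sin (∠ q x₁ x₂ / 2) * sin (∠ q x₂ x₁ / 2) /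
        sin (∠ x₁ q x₂ / 2)) * dist x₁ x₂) := by
    rw [← mul_assoc, ← sin_add_sin_eq_sin_mul_of_add_add_eq_pi hsum hhalf]
    linear_combination -sine₁ - sine₂
  exact mul_left_cancel₀ (sin_pos_of_not_collinear h').ne' key

end

/-- In any nondegenerate triangle `q x₁ x₂` with angles `θ = ∠ x₁ q x₂`, `θ₁ = ∠ q x₁ x₂`,
`θ₂ = ∠ q x₂ x₁`, one has
`|x₁ - q| + |q - x₂| = (1 + 2·sin(θ₁/2)·sin(θ₂/2)/sin(θ/2)) · |x₁ - x₂|`. -/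
theorem stmt_6 (q x₁ x₂ : EuclideanSpace ℝ (Fin 3))
    (h : ¬ Collinear ℝ ({q, x₁, x₂} : Set (EuclideanSpace ℝ (Fin 3)))) :
    dist x₁ q + dist q x₂ =
      (1 + 2 * Real.sin (∠ q x₁ x₂ / 2) * Real.sin (∠ q x₂ x₁ / 2) /
        Real.sin (∠ x₁ q x₂ / 2)) * dist x₁ x₂ :=
  dist_add_dist_eq_mul_dist_of_not_collinear h
end

section
/- Let a triangle have vertices x₁, x₂, q with angles θ₁ at x₁, θ₂ at x₂, and θ at q, where θ₁ + θ₂ + θ = π. If max(θ₁, θ₂) ≤ arcsin(√(ε/2)) for some ε ∈ (0,1], then |x₁ - q| + |q - x₂| ≤ (1 + ε/2)·|x₁ - x₂|. -/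
/-!
Projecting the two legs `x₁q` and `qx₂` onto the base gives
`|x₁ - q| cos θ₁ + |q - x₂| cos θ₂ = |x₁ - x₂|`. Both cosines are at least
`cos (arcsin √(ε/2)) = √(1 - ε/2)`, so `√(1 - ε/2) (|x₁ - q| + |q - x₂|) ≤ |x₁ - x₂|`, and
`1 ≤ √(1 - ε/2) (1 + ε/2)` for `ε ≤ 1`.
-/

open EuclideanGeometry

namespace EuclideanGeometry

variable {V P : Type*} [NormedAddCommGroup V] [InnerProductSpace ℝ V] [MetricSpace P]
  [NormedAddTorsor V P]

theorem dist_mul_cos_angle_add_dist_mul_cos_angle (p₁ p₂ q : P) :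
    dist p₁ q * Real.cos (∠ q p₁ p₂) + dist q p₂ * Real.cos (∠ q p₂ p₁) = dist p₁ p₂ := by
  rcases eq_or_ne p₁ p₂ with rfl | hne
  · simp
  -- adding the law of cosines at `p₁` and at `p₂` leaves `c (a cos θ₁ + b cos θ₂) = c²`
  have law₁ := dist_sq_eq_dist_sq_add_dist_sq_sub_two_mul_dist_mul_dist_mul_cos_angle q p₁ p₂
  have law₂ := dist_sq_eq_dist_sq_add_dist_sq_sub_two_mul_dist_mul_dist_mul_cos_angle q p₂ p₁
  have hc : dist p₁ p₂ ≠ 0 := dist_ne_zero.mpr hne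
  apply mul_left_cancel₀ hc
  rw [dist_comm q p₁, dist_comm p₂ p₁] at *
  linarith

theorem cos_mul_dist_add_dist_le_dist {p₁ p₂ q : P} {α : ℝ} (hα : α ≤ Real.pi)
    (h₁ : ∠ q p₁ p₂ ≤ α) (h₂ : ∠ q p₂ p₁ ≤ α) :
    Real.cos α * (dist p₁ q + dist q p₂) ≤ dist p₁ p₂ := by
  have hcos {θ : ℝ} (hθ : 0 ≤ θ) (hθα : θ ≤ α) : Real.cos α ≤ Real.cos θ :=
    Real.cos_le_cos_of_nonneg_of_le_pi hθ hα hθα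
  calc Real.cos α * (dist p₁ q + dist q p₂)
      = dist p₁ q * Real.cos α + dist q p₂ * Real.cos α := by ring
    _ ≤ dist p₁ q * Real.cos (∠ q p₁ p₂) + dist q p₂ * Real.cos (∠ q p₂ p₁) := by
      gcongr
      exacts [hcos (angle_nonneg _ _ _) h₁, hcos (angle_nonneg _ _ _) h₂]
    _ = dist p₁ p₂ := dist_mul_cos_angle_add_dist_mul_cos_angle p₁ p₂ q

end EuclideanGeometry

theorem Real.one_le_sqrt_one_sub_mul_one_add {t : ℝ} (ht₀ : 0 ≤ t) (ht₁ : t ≤ 1 / 2) :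
    1 ≤ √(1 - t) * (1 + t) := by
  rw [← Real.sqrt_sq (by linarith : 0 ≤ 1 + t), ← Real.sqrt_mul (by linarith)]
  apply Real.one_le_sqrt.mpr
  nlinarith [mul_nonneg ht₀ (by linarith : 0 ≤ 1 / 2 - t), mul_nonneg ht₀ ht₀]

theorem stmt_8_general (x₁ x₂ q : EuclideanSpace ℝ (Fin 3)) (ε : ℝ) (hε : ε ∈ Set.Ioc 0 1)
    (hangle : max (∠ q x₁ x₂) (∠ q x₂ x₁) ≤ Real.arcsin (Real.sqrt (ε / 2))) :
    dist x₁ q + dist q x₂ ≤ (1 + ε / 2) * dist x₁ x₂ := by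
  obtain ⟨hε₀, hε₁⟩ := hε
  have hcos : Real.cos (Real.arcsin (Real.sqrt (ε / 2))) = √(1 - ε / 2) := by
    rw [Real.cos_arcsin, Real.sq_sqrt (by linarith)]
  have hproj : √(1 - ε / 2) * (dist x₁ q + dist q x₂) ≤ dist x₁ x₂ := by
    rw [← hcos]
    exact cos_mul_dist_add_dist_le_dist
      ((Real.arcsin_le_pi_div_two _).trans (by linarith [Real.pi_pos]))
      (le_of_max_le_left hangle) (le_of_max_le_right hangle)
  calc dist x₁ q + dist q x₂
      ≤ (√(1 - ε / 2) * (1 + ε / 2)) * (dist x₁ q + dist q x₂) :=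
        le_mul_of_one_le_left (by positivity)
          (Real.one_le_sqrt_one_sub_mul_one_add (by linarith) (by linarith))
    _ = (1 + ε / 2) * (√(1 - ε / 2) * (dist x₁ q + dist q x₂)) := by ring
    _ ≤ (1 + ε / 2) * dist x₁ x₂ := by gcongr

/-- If in a nondegenerate triangle `x₁ x₂ q` the angles at `x₁` and at `x₂` are both at most
`arcsin √(ε/2)` for some `ε ∈ (0,1]`, then
`|x₁ - q| + |q - x₂| ≤ (1 + ε/2)·|x₁ - x₂|`. -/
theorem stmt_8 (x₁ x₂ q : EuclideanSpace ℝ (Fin 3)) (ε : ℝ) (hε : ε ∈ Set.Ioc 0 1)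
    (h : ¬ Collinear ℝ ({x₁, x₂, q} : Set (EuclideanSpace ℝ (Fin 3))))
    (hangle : max (∠ q x₁ x₂) (∠ q x₂ x₁) ≤ Real.arcsin (Real.sqrt (ε / 2))) :
    dist x₁ q + dist q x₂ ≤ (1 + ε / 2) * dist x₁ x₂ :=
  stmt_8_general x₁ x₂ q ε hε hangle
end

section
/- Let h > 0, r > 0 with r ≤ h, ε ∈ (0,1], γ ∈ (0,π), and λ = (1 + √(ε/8)·sin(γ/2))⁻¹. Define i₁ to be the smallest positive integer such that h·λ^{i₁} < ε·r. Then i₁ - 1 = ⌊log_λ(ε·r/h)⌋, and i₁ - 1 ≤ (3.44/(√ε·sin(γ/2)))·ln(h/(ε·r)) + 1. In particular, the number of Steiner-point levels is O((1/√ε)·log(1/ε)·log(h/r)) as ε → 0. -/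
/-!
Since `λ < 1`, the condition `h·λ^j < ε·r` is equivalent to `log_λ(ε·r/h) < j`, and as
`ε·r ≤ h` this logarithm is nonnegative, so the least positive such `j` is `⌊log_λ(ε·r/h)⌋ + 1`.
For the bound, write `x = √ε·sin(γ/2) ∈ (0, 1]`, so that `λ⁻¹ = 1 + x/√8`. Concavity of `log`
(in the form of Bernoulli's inequality) gives `log(1 + x/√8) ≥ x·log(1 + 1/√8) ≥ x/3.44`, hence
`log_λ(ε·r/h) = ln(h/(ε·r)) / log(1 + x/√8) ≤ (3.44/x)·ln(h/(ε·r))`.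
-/

open Real

theorem natCast_sub_one_eq_floor_of_lt_of_minimal {α : Type*} [Ring α] [LinearOrder α]
    [IsStrictOrderedRing α] [FloorRing α] {L : α} {i : ℕ} (hL : 0 ≤ L) (hlt : L < i)
    (hmin : ∀ j : ℕ, 0 < j → L < j → i ≤ j) : (i : ℤ) - 1 = ⌊L⌋ := by
  have hle : i ≤ ⌊L⌋₊ + 1 := hmin _ (Nat.succ_pos _) (by exact_mod_cast Nat.lt_floor_add_one L)
  have hgt : ⌊L⌋₊ < i := (Nat.floor_lt hL).2 hlt
  rw [← Int.natCast_floor_eq_floor hL]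
  omega

namespace Real

theorem mul_pow_lt_iff_logb_lt {q a h : ℝ} (hq0 : 0 < q) (hq1 : q < 1) (ha : 0 < a)
    (hh : 0 < h) (j : ℕ) : h * q ^ j < a ↔ logb q (a / h) < j := by
  rw [logb_lt_iff_lt_rpow_of_base_lt_one hq0 hq1 (div_pos ha hh), rpow_natCast,
    lt_div_iff₀ hh, mul_comm]

theorem mul_log_one_add_le_log_one_add_mul {c p : ℝ} (hc : -1 < c) (hp0 : 0 ≤ p) (hp1 : p ≤ 1) :
    p * log (1 + c) ≤ log (1 + p * c) := by
  have hc' : 0 < 1 + c := by linarith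
  rw [← log_rpow hc']
  exact log_le_log (rpow_pos_of_pos hc' p) (rpow_one_add_le_one_add_mul_self hc.le hp0 hp1)

theorem inv_three_point_four_four_le_log_one_add_inv_sqrt_eight :
    (3.44 : ℝ)⁻¹ ≤ log (1 + (√8)⁻¹) := by
  have hsqrt : √8 ≤ 20 / 7 := sqrt_le_iff.2 ⟨by norm_num, by norm_num⟩
  have hinv : (7 / 20 : ℝ) ≤ (√8)⁻¹ := by
    rw [le_inv_comm₀ (by norm_num) (by positivity)]
    linarith
  calc (3.44 : ℝ)⁻¹ ≤ 2 * (7 / 20) / (7 / 20 + 2) := by norm_num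
    _ ≤ 2 * (√8)⁻¹ / ((√8)⁻¹ + 2) := by
      rw [div_le_div_iff₀ (by norm_num) (by positivity)]
      nlinarith
    _ ≤ log (1 + (√8)⁻¹) := le_log_one_add_of_nonneg (by positivity)

theorem le_mul_log_one_add_div_sqrt_eight {x : ℝ} (hx0 : 0 ≤ x) (hx1 : x ≤ 1) :
    x ≤ 3.44 * log (1 + x / √8) := by
  have hconc := mul_log_one_add_le_log_one_add_mul
    (c := (√8)⁻¹) (by linarith [inv_nonneg.2 (sqrt_nonneg 8)]) hx0 hx1
  rw [← div_eq_mul_inv] at hconc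
  nlinarith [inv_three_point_four_four_le_log_one_add_inv_sqrt_eight]

theorem logb_inv_one_add_div_sqrt_eight_le {x a h : ℝ} (hx0 : 0 < x) (hx1 : x ≤ 1) (ha : 0 < a)
    (hah : a ≤ h) : logb (1 + x / √8)⁻¹ (a / h) ≤ 3.44 / x * log (h / a) := by
  have hlog : x / 3.44 ≤ log (1 + x / √8) := by
    rw [div_le_iff₀ (by norm_num), mul_comm]
    exact le_mul_log_one_add_div_sqrt_eight hx0.le hx1
  calc logb (1 + x / √8)⁻¹ (a / h) = log (h / a) / log (1 + x / √8) := by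
        rw [logb_inv_base, ← logb_inv, inv_div, logb]
    _ ≤ log (h / a) / (x / 3.44) :=
        div_le_div_of_nonneg_left (log_nonneg ((one_le_div ha).2 hah)) (by positivity) hlog
    _ = 3.44 / x * log (h / a) := by ring

end Real

theorem stmt_10_general (h r γ ε : ℝ) (i₁ : ℕ)
    (hh : 0 < h) (hr : 0 < r) (hrh : r ≤ h) (hε : ε ∈ Set.Ioc 0 1)
    (hγ : γ ∈ Set.Ioo 0 Real.pi)
    (hlt : h * ((1 + Real.sqrt (ε / 8) * Real.sin (γ / 2))⁻¹) ^ i₁ < ε * r)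
    (hmin : ∀ j : ℕ, 0 < j →
      h * ((1 + Real.sqrt (ε / 8) * Real.sin (γ / 2))⁻¹) ^ j < ε * r → i₁ ≤ j) :
    (i₁ : ℤ) - 1 =
      ⌊Real.logb ((1 + Real.sqrt (ε / 8) * Real.sin (γ / 2))⁻¹) (ε * r / h)⌋ ∧
    (i₁ : ℝ) - 1 ≤
      3.44 / (Real.sqrt ε * Real.sin (γ / 2)) * Real.log (h / (ε * r)) + 1 := by
  obtain ⟨hε0, hε1⟩ := hε
  have hsin : 0 < sin (γ / 2) :=
    sin_pos_of_pos_of_lt_pi (by linarith [hγ.1]) (by linarith [hγ.2, pi_pos])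
  have hx1 : √ε * sin (γ / 2) ≤ 1 := mul_le_one₀ (sqrt_le_one.2 hε1) hsin.le (sin_le_one _)
  have hs : √(ε / 8) * sin (γ / 2) = √ε * sin (γ / 2) / √8 := by
    rw [sqrt_div' _ (by norm_num)]; ring
  rw [hs] at hlt hmin ⊢
  set x := √ε * sin (γ / 2)
  have hx0 : 0 < x := by positivity
  have hq0 : 0 < (1 + x / √8)⁻¹ := by positivity
  have hq1 : (1 + x / √8)⁻¹ < 1 := inv_lt_one_of_one_lt₀ (lt_add_of_pos_right 1 (by positivity))
  have ha : 0 < ε * r := mul_pos hε0 hr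
  have hah : ε * r ≤ h := by nlinarith
  have hlevel := mul_pow_lt_iff_logb_lt hq0 hq1 ha hh
  have hfloor := natCast_sub_one_eq_floor_of_lt_of_minimal
    (logb_nonneg_of_base_lt_one hq0 hq1 (div_pos ha hh) ((div_le_one hh).2 hah))
    ((hlevel i₁).1 hlt) (fun j hj hjL => hmin j hj ((hlevel j).2 hjL))
  refine ⟨hfloor, ?_⟩
  calc (i₁ : ℝ) - 1 = ⌊logb (1 + x / √8)⁻¹ (ε * r / h)⌋ := by exact_mod_cast hfloor
    _ ≤ logb (1 + x / √8)⁻¹ (ε * r / h) := Int.floor_le _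
    _ ≤ 3.44 / x * log (h / (ε * r)) := logb_inv_one_add_div_sqrt_eight_le hx0 hx1 ha hah
    _ ≤ _ := le_add_of_nonneg_right zero_le_one

/-- If `i₁` is the smallest positive integer with `h·λ^{i₁} < ε·r`, where
`λ = (1 + √(ε/8)·sin(γ/2))⁻¹`, then `i₁ - 1 = ⌊log_λ(ε·r/h)⌋` and
`i₁ - 1 ≤ (3.44/(√ε·sin(γ/2)))·ln(h/(ε·r)) + 1`. -/
theorem stmt_10 (h r γ ε : ℝ) (i₁ : ℕ)
    (hh : 0 < h) (hr : 0 < r) (hrh : r ≤ h) (hε : ε ∈ Set.Ioc 0 1)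
    (hγ : γ ∈ Set.Ioo 0 Real.pi) (hpos : 0 < i₁)
    (hlt : h * ((1 + Real.sqrt (ε / 8) * Real.sin (γ / 2))⁻¹) ^ i₁ < ε * r)
    (hmin : ∀ j : ℕ, 0 < j →
      h * ((1 + Real.sqrt (ε / 8) * Real.sin (γ / 2))⁻¹) ^ j < ε * r → i₁ ≤ j) :
    (i₁ : ℤ) - 1 =
      ⌊Real.logb ((1 + Real.sqrt (ε / 8) * Real.sin (γ / 2))⁻¹) (ε * r / h)⌋ ∧
    (i₁ : ℝ) - 1 ≤
      3.44 / (Real.sqrt ε * Real.sin (γ / 2)) * Real.log (h / (ε * r)) + 1 :=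
  stmt_10_general h r γ ε i₁ hh hr hrh hε hγ hlt hmin
end

section
/- Let F = {z = 0} ⊂ ℝ³, let v, v' be two distinct points in the open half-space F⁻ = {z < 0}, and let w⁻, w⁺ > 0 with c(p, x̄) denoting the weighted distance inf over a ∈ F of (w⁻|p - a| + w⁺|a - x̄|) from p ∈ F⁻ to x̄ ∈ F⁺ = {z > 0}. If |v_z| = |v'_z| (v and v' at equal distance from F), then the bisector B(v,v') = {x̄ ∈ F⁺ : c(v, x̄) = c(v', x̄)} equals {x̄ ∈ F⁺ : dist(x̄_proj, v_proj) = dist(x̄_proj, v'_proj)}, where _proj denotes orthogonal projection onto F, i.e., the intersection with F⁺ of the perpendicular bisector plane of v and v'. Consequently B(v,v') ∩ ℓ, for any line ℓ ⊂ F⁺ parallel to F, is a single point, empty, or all of ℓ. -/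
/-- The refractive weighted distance from `p` (below the plane `F = {z = 0}`) to `x` (above
`F`): the infimum over bending points `a ∈ F` of `w⁻·|p - a| + w⁺·|a - x|`. -/
noncomputable def rcost (wm wp : ℝ) (p x : EuclideanSpace ℝ (Fin 3)) : ℝ :=
  ⨅ a : ℝ × ℝ, (wm * dist p (pt3 a.1 a.2 0) + wp * dist (pt3 a.1 a.2 0) x)

/-- Orthogonal projection onto the plane `F = {z = 0}`, viewed in the Euclidean plane. -/
noncomputable def proj2 (p : EuclideanSpace ℝ (Fin 3)) : EuclideanSpace ℝ (Fin 2) :=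
  WithLp.toLp 2 ![p 0, p 1]

noncomputable def pt2 (a b : ℝ) : EuclideanSpace ℝ (Fin 2) := WithLp.toLp 2 ![a, b]

lemma pt2_eta (A : EuclideanSpace ℝ (Fin 2)) : pt2 (A 0) (A 1) = A := by
  ext i; fin_cases i <;> simp [pt2]

lemma dist2_sq (x y : EuclideanSpace ℝ (Fin 2)) :
    dist x y ^ 2 = (x 0 - y 0) ^ 2 + (x 1 - y 1) ^ 2 := by
  rw [EuclideanSpace.dist_eq, Real.sq_sqrt (by positivity)]
  simp [Fin.sum_univ_two, Real.dist_eq, sq_abs]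

lemma dist2_eq (x y : EuclideanSpace ℝ (Fin 2)) :
    dist x y = Real.sqrt ((x 0 - y 0) ^ 2 + (x 1 - y 1) ^ 2) := by
  rw [EuclideanSpace.dist_eq]
  congr 1
  simp [Fin.sum_univ_two, Real.dist_eq, sq_abs]

lemma dist3_split (p : EuclideanSpace ℝ (Fin 3)) (a b : ℝ) :
    dist p (pt3 a b 0) = Real.sqrt (dist (proj2 p) (pt2 a b) ^ 2 + (p 2) ^ 2) := by
  rw [EuclideanSpace.dist_eq, dist2_sq]
  simp [pt3, pt2, proj2, Fin.sum_univ_three, Real.dist_eq, sq_abs]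

lemma dist3_split' (x : EuclideanSpace ℝ (Fin 3)) (a b : ℝ) :
    dist (pt3 a b 0) x = Real.sqrt (dist (pt2 a b) (proj2 x) ^ 2 + (x 2) ^ 2) := by
  rw [EuclideanSpace.dist_eq, dist2_sq]
  simp [pt3, pt2, proj2, Fin.sum_univ_three, Real.dist_eq, sq_abs]

noncomputable def phi (w c s : ℝ) : ℝ := w * Real.sqrt (s ^ 2 + c ^ 2)

lemma phi_nonneg {w : ℝ} (hw : 0 ≤ w) (c s : ℝ) : 0 ≤ phi w c s :=
  mul_nonneg hw (Real.sqrt_nonneg _)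

lemma phi_le {w : ℝ} (hw : 0 ≤ w) (c : ℝ) {s t : ℝ} (h : |s| ≤ |t|) :
    phi w c s ≤ phi w c t := by
  have hsq : s ^ 2 ≤ t ^ 2 := by
    rw [← sq_abs s, ← sq_abs t]; exact pow_le_pow_left₀ (abs_nonneg s) h 2
  exact mul_le_mul_of_nonneg_left (Real.sqrt_le_sqrt (by linarith)) hw

lemma phi_lt {w : ℝ} (hw : 0 < w) (c : ℝ) {s t : ℝ} (hs : 0 ≤ s) (hst : s < t) :
    phi w c s < phi w c t := by
  have hsq : s ^ 2 < t ^ 2 := by nlinarith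
  exact mul_lt_mul_of_pos_left (Real.sqrt_lt_sqrt (by positivity) (by linarith)) hw

noncomputable def Gfun (wm wp c k D : ℝ) : ℝ :=
  ⨅ s : ℝ, (phi wm c s + phi wp k (D - s))

lemma Gfun_bdd {wm wp : ℝ} (hwm : 0 ≤ wm) (hwp : 0 ≤ wp) (c k D : ℝ) :
    BddBelow (Set.range fun s : ℝ => phi wm c s + phi wp k (D - s)) := by
  refine ⟨0, ?_⟩
  rintro x ⟨s, rfl⟩
  exact add_nonneg (phi_nonneg hwm _ _) (phi_nonneg hwp _ _)

lemma F_clamp_le {wm wp : ℝ} (hwm : 0 ≤ wm) (hwp : 0 ≤ wp) (c k : ℝ) {D : ℝ} (hD : 0 ≤ D)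
    (t : ℝ) :
    phi wm c (max 0 (min t D)) + phi wp k (D - max 0 (min t D)) ≤
      phi wm c t + phi wp k (D - t) := by
  rcases lt_or_ge t 0 with h | h
  · have he : max 0 (min t D) = 0 := by
      rw [min_eq_left (le_trans h.le hD), max_eq_left h.le]
    rw [he, sub_zero]
    refine add_le_add (phi_le hwm _ ?_) (phi_le hwp _ ?_)
    · simp [abs_nonneg]
    · calc |D| = D := abs_of_nonneg hD
        _ ≤ D - t := by linarith
        _ ≤ |D - t| := le_abs_self _
  · rcases le_or_gt t D with h2 | h2
    · rw [min_eq_left h2, max_eq_right h]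
    · have he : max 0 (min t D) = D := by rw [min_eq_right h2.le, max_eq_right hD]
      rw [he, sub_self]
      refine add_le_add (phi_le hwm _ ?_) (phi_le hwp _ ?_)
      · calc |D| = D := abs_of_nonneg hD
          _ ≤ t := h2.le
          _ ≤ |t| := le_abs_self _
      · simp [abs_nonneg]

lemma clamp_mem {D : ℝ} (hD : 0 ≤ D) (t : ℝ) : max 0 (min t D) ∈ Set.Icc 0 D :=
  ⟨le_max_left _ _, max_le hD (min_le_right _ _)⟩

lemma Gfun_attained {wm wp : ℝ} (hwm : 0 ≤ wm) (hwp : 0 ≤ wp) (c k : ℝ) {D : ℝ} (hD : 0 ≤ D) :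
    ∃ s, 0 ≤ s ∧ s ≤ D ∧ Gfun wm wp c k D = phi wm c s + phi wp k (D - s) ∧
      ∀ t, phi wm c s + phi wp k (D - s) ≤ phi wm c t + phi wp k (D - t) := by
  have hcont : Continuous fun s : ℝ => phi wm c s + phi wp k (D - s) := by
    unfold phi; fun_prop
  obtain ⟨s, hsmem, hmin⟩ := isCompact_Icc.exists_isMinOn (Set.nonempty_Icc.2 hD)
    hcont.continuousOn
  have hglob : ∀ t, phi wm c s + phi wp k (D - s) ≤ phi wm c t + phi wp k (D - t) := by
    intro t
    exact le_trans (hmin (clamp_mem hD t)) (F_clamp_le hwm hwp c k hD t)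
  refine ⟨s, hsmem.1, hsmem.2, le_antisymm ?_ (le_ciInf hglob), hglob⟩
  exact ciInf_le (Gfun_bdd hwm hwp c k D) s

lemma Gfun_strictMono {wm wp : ℝ} (hwm : 0 < wm) (hwp : 0 < wp) (c k : ℝ) {D1 D2 : ℝ}
    (hD1 : 0 ≤ D1) (h12 : D1 < D2) : Gfun wm wp c k D1 < Gfun wm wp c k D2 := by
  have hD2 : 0 < D2 := lt_of_le_of_lt hD1 h12
  obtain ⟨s, hs0, hsD, hGeq, -⟩ := Gfun_attained hwm.le hwp.le c k hD2.le
  set l := D1 / D2 with hl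
  have hl0 : 0 ≤ l := div_nonneg hD1 hD2.le
  have hl1 : l < 1 := (div_lt_one hD2).2 h12
  have hlD : l * D2 = D1 := div_mul_cancel₀ D1 hD2.ne'
  have h1 : Gfun wm wp c k D1 ≤ phi wm c (l * s) + phi wp k (l * (D2 - s)) := by
    have := ciInf_le (Gfun_bdd hwm.le hwp.le c k D1) (l * s)
    have he : D1 - l * s = l * (D2 - s) := by rw [← hlD]; ring
    rwa [he] at this
  have h2 : phi wm c (l * s) + phi wp k (l * (D2 - s)) < phi wm c s + phi wp k (D2 - s) := by
    rcases eq_or_lt_of_le hs0 with rfl | hspos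
    · apply add_lt_add_of_le_of_lt
      · simp
      · apply phi_lt hwp _ (mul_nonneg hl0 (by linarith))
        rw [mul_sub, mul_zero, sub_zero, sub_zero, hlD]; exact h12
    · apply add_lt_add_of_lt_of_le
      · exact phi_lt hwm _ (mul_nonneg hl0 hspos.le) (by nlinarith)
      · apply phi_le hwp.le
        rw [abs_mul]
        calc |l| * |D2 - s| ≤ 1 * |D2 - s| := by
              apply mul_le_mul_of_nonneg_right _ (abs_nonneg _)
              rw [abs_of_nonneg hl0]; exact hl1.le
          _ = |D2 - s| := one_mul _
  calc Gfun wm wp c k D1 ≤ _ := h1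
    _ < _ := h2
    _ = Gfun wm wp c k D2 := hGeq.symm

lemma Gfun_inj {wm wp : ℝ} (hwm : 0 < wm) (hwp : 0 < wp) (c k : ℝ) {D1 D2 : ℝ}
    (hD1 : 0 ≤ D1) (hD2 : 0 ≤ D2) (h : Gfun wm wp c k D1 = Gfun wm wp c k D2) : D1 = D2 := by
  rcases lt_trichotomy D1 D2 with hlt | he | hlt
  · exact absurd h (Gfun_strictMono hwm hwp c k hD1 hlt).ne
  · exact he
  · exact absurd h.symm (Gfun_strictMono hwm hwp c k hD2 hlt).ne

lemma rcost_bdd {wm wp : ℝ} (hwm : 0 ≤ wm) (hwp : 0 ≤ wp) (p x : EuclideanSpace ℝ (Fin 3)) :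
    BddBelow (Set.range fun a : ℝ × ℝ =>
      wm * dist p (pt3 a.1 a.2 0) + wp * dist (pt3 a.1 a.2 0) x) := by
  refine ⟨0, ?_⟩
  rintro y ⟨a, rfl⟩
  exact add_nonneg (mul_nonneg hwm dist_nonneg) (mul_nonneg hwp dist_nonneg)

lemma rcost_eq {wm wp : ℝ} (hwm : 0 ≤ wm) (hwp : 0 ≤ wp) (p x : EuclideanSpace ℝ (Fin 3)) :
    rcost wm wp p x = Gfun wm wp (p 2) (x 2) (dist (proj2 p) (proj2 x)) := by
  have hD0 : (0 : ℝ) ≤ dist (proj2 p) (proj2 x) := dist_nonneg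
  apply le_antisymm
  · -- rcost ≤ G
    apply le_ciInf
    intro s
    obtain ⟨hs'0, hs'D⟩ := clamp_mem hD0 s
    refine le_trans ?_ (F_clamp_le hwm hwp (p 2) (x 2) hD0 s)
    -- rcost ≤ F (clamp s)
    by_cases hDz : dist (proj2 p) (proj2 x) = 0
    · have hcl : max 0 (min s (dist (proj2 p) (proj2 x))) = 0 :=
        le_antisymm (hDz ▸ hs'D) hs'0
      have hqr : proj2 p = proj2 x := dist_eq_zero.1 hDz
      rw [hcl, sub_zero, hDz]
      refine le_trans (ciInf_le (rcost_bdd hwm hwp p x) (p 0, p 1)) ?_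
      have hpt : pt3 (p 0, p 1).1 (p 0, p 1).2 0 = pt3 (p 0) (p 1) 0 := rfl
      rw [hpt, dist3_split, dist3_split']
      have hpe : pt2 (p 0) (p 1) = proj2 p := rfl
      rw [hpe, dist_self, hqr, dist_self]
      unfold phi
      norm_num
    · have hDpos : 0 < dist (proj2 p) (proj2 x) := lt_of_le_of_ne hD0 (Ne.symm hDz)
      set D := dist (proj2 p) (proj2 x) with hDdef
      set s' := max 0 (min s D) with hs'def
      set A : EuclideanSpace ℝ (Fin 2) :=
        proj2 p + (s' / D) • (proj2 x - proj2 p) with hA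
      have hc0 : 0 ≤ s' / D := div_nonneg hs'0 hD0
      have hc1 : s' / D ≤ 1 := (div_le_one hDpos).2 hs'D
      have hdqA : dist (proj2 p) A = s' := by
        rw [dist_eq_norm]
        have he : proj2 p - A = (s' / D) • (proj2 p - proj2 x) := by rw [hA]; module
        rw [he, norm_smul, Real.norm_eq_abs, abs_of_nonneg hc0, ← dist_eq_norm, ← hDdef]
        field_simp
      have hdAr : dist A (proj2 x) = D - s' := by
        rw [dist_eq_norm]
        have he : A - proj2 x = (1 - s' / D) • (proj2 p - proj2 x) := by rw [hA]; module
        rw [he, norm_smul, Real.norm_eq_abs, abs_of_nonneg (by linarith), ← dist_eq_norm,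
          ← hDdef]
        field_simp
      refine le_trans (ciInf_le (rcost_bdd hwm hwp p x) (A 0, A 1)) ?_
      have hpt : pt3 (A 0, A 1).1 (A 0, A 1).2 0 = pt3 (A 0) (A 1) 0 := rfl
      rw [hpt, dist3_split, dist3_split', pt2_eta, hdqA, hdAr]
      exact le_refl _
  · -- G ≤ rcost
    apply le_ciInf
    intro a
    rw [dist3_split, dist3_split']
    have hu0 : 0 ≤ dist (proj2 p) (pt2 a.1 a.2) := dist_nonneg
    have ht0 : 0 ≤ dist (pt2 a.1 a.2) (proj2 x) := dist_nonneg
    have htri : dist (proj2 p) (proj2 x) ≤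
        dist (proj2 p) (pt2 a.1 a.2) + dist (pt2 a.1 a.2) (proj2 x) :=
      dist_triangle _ _ _
    set D := dist (proj2 p) (proj2 x) with hDdef
    set u := dist (proj2 p) (pt2 a.1 a.2) with hu
    set t := dist (pt2 a.1 a.2) (proj2 x) with ht
    have hs0 : 0 ≤ min u D := le_min hu0 hD0
    have hsD : min u D ≤ D := min_le_right _ _
    have hsu : min u D ≤ u := min_le_left _ _
    have hDst : D - min u D ≤ t := by
      rcases le_total u D with h | h
      · rw [min_eq_left h]; linarith
      · rw [min_eq_right h]; linarith
    calc Gfun wm wp (p 2) (x 2) D ≤ phi wm (p 2) (min u D) + phi wp (x 2) (D - min u D) :=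
          ciInf_le (Gfun_bdd hwm hwp _ _ _) (min u D)
      _ ≤ phi wm (p 2) u + phi wp (x 2) t := by
          refine add_le_add (phi_le hwm _ ?_) (phi_le hwp _ ?_)
          · rw [abs_of_nonneg hs0, abs_of_nonneg hu0]; exact hsu
          · rw [abs_of_nonneg (by linarith), abs_of_nonneg ht0]; exact hDst
      _ = wm * Real.sqrt (u ^ 2 + p 2 ^ 2) + wp * Real.sqrt (t ^ 2 + x 2 ^ 2) := rfl


/-- For two distinct sites `v, v'` below `F` at equal distance from `F`, the bisector
`{x ∈ F⁺ : c(v,x) = c(v',x)}` is exactly the part of the perpendicular-bisector plane of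
`v, v'` above `F` (described via projections); consequently its intersection with any line in
`F⁺` parallel to `F` is empty, a single point, or the whole line. -/
theorem stmt_19 (wm wp : ℝ) (hwm : 0 < wm) (hwp : 0 < wp)
    (v v' : EuclideanSpace ℝ (Fin 3)) (hv : v 2 < 0) (hv' : v' 2 < 0)
    (hne : v ≠ v') (hdepth : v 2 = v' 2) :
    (∀ x : EuclideanSpace ℝ (Fin 3), 0 < x 2 →
      (rcost wm wp v x = rcost wm wp v' x ↔
        dist (proj2 x) (proj2 v) = dist (proj2 x) (proj2 v'))) ∧
    (∀ b d : EuclideanSpace ℝ (Fin 3), 0 < b 2 → d 2 = 0 → d ≠ 0 →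
      {t : ℝ | rcost wm wp v (b + t • d) = rcost wm wp v' (b + t • d)} = ∅ ∨
      {t : ℝ | rcost wm wp v (b + t • d) = rcost wm wp v' (b + t • d)} = Set.univ ∨
      ∃ t₀ : ℝ, {t : ℝ | rcost wm wp v (b + t • d) = rcost wm wp v' (b + t • d)} = {t₀}) := by
  have part1 : ∀ x : EuclideanSpace ℝ (Fin 3),
      (rcost wm wp v x = rcost wm wp v' x ↔
        dist (proj2 x) (proj2 v) = dist (proj2 x) (proj2 v')) := by
    intro x
    rw [rcost_eq hwm.le hwp.le v x, rcost_eq hwm.le hwp.le v' x, hdepth]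
    constructor
    · intro h
      rw [dist_comm (proj2 x) (proj2 v), dist_comm (proj2 x) (proj2 v')]
      exact Gfun_inj hwm hwp _ _ dist_nonneg dist_nonneg h
    · intro h
      rw [dist_comm (proj2 v) (proj2 x), dist_comm (proj2 v') (proj2 x), h]
  refine ⟨fun x _ => part1 x, ?_⟩
  intro b d _ hd2 _
  set α := 2 * (d 0 * (v' 0 - v 0) + d 1 * (v' 1 - v 1)) with hα
  set β := (v' 0 ^ 2 + v' 1 ^ 2 - v 0 ^ 2 - v 1 ^ 2)
      - 2 * (b 0 * (v' 0 - v 0) + b 1 * (v' 1 - v 1)) with hβ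
  have key : ∀ t : ℝ, rcost wm wp v (b + t • d) = rcost wm wp v' (b + t • d) ↔ α * t = β := by
    intro t
    rw [part1 (b + t • d), dist2_eq, dist2_eq]
    have hP0 : proj2 (b + t • d) 0 = b 0 + t * d 0 := by
      simp [proj2]
    have hP1 : proj2 (b + t • d) 1 = b 1 + t * d 1 := by
      simp [proj2]
    have hv0 : proj2 v 0 = v 0 := by simp [proj2]
    have hv1 : proj2 v 1 = v 1 := by simp [proj2]
    have hv'0 : proj2 v' 0 = v' 0 := by simp [proj2]
    have hv'1 : proj2 v' 1 = v' 1 := by simp [proj2]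
    rw [hP0, hP1, hv0, hv1, hv'0, hv'1]
    rw [Real.sqrt_inj (by positivity) (by positivity)]
    constructor
    · intro h; rw [hα, hβ]; linear_combination h
    · intro h; rw [hα, hβ] at h; linear_combination h
  have hset : {t : ℝ | rcost wm wp v (b + t • d) = rcost wm wp v' (b + t • d)}
      = {t : ℝ | α * t = β} := Set.ext fun t => key t
  rw [hset]
  rcases eq_or_ne α 0 with hα0 | hα0
  · by_cases hβ0 : β = 0
    · right; left; ext t; simp [hα0, hβ0]
    · left; ext t
      simp only [Set.mem_setOf_eq, hα0, zero_mul, Set.mem_empty_iff_false, iff_false]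
      exact fun h => hβ0 h.symm
  · right; right
    refine ⟨β / α, ?_⟩
    ext t
    simp only [Set.mem_setOf_eq, Set.mem_singleton_iff]
    rw [eq_div_iff hα0, mul_comm t α]
end
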